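/- Let s ≥ 2 be an integer and let g : ℝ → ℝ satisfy: for every admissible digit sequence a, g(∑_{n=0}^∞ a n / s^{n+1}) = ∑_{n=0}^∞ (−1)^{n+1} a n / s^{n+1}. Then g is neither monotone (nondecreasing) nor antitone (nonincreasing) on [0,1): ¬ MonotoneOn g [0,1) and ¬ AntitoneOn g [0,1). (Paper's Lemma 3, second property, for the function f₊.) -/
import Mathlib

lemma single_digit_val (s : ℕ) (hs : 2 ≤ s) (k : ℕ) :
    (∑' n : ℕ, ((if n = k then 1 else 0 : ℕ) : ℝ) / (s : ℝ) ^ (n + 1))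
      = 1 / (s : ℝ) ^ (k + 1) := by
  have : (fun n : ℕ => ((if n = k then 1 else 0 : ℕ) : ℝ) / (s : ℝ) ^ (n + 1))
      = fun n : ℕ => if n = k then 1 / (s : ℝ) ^ (k + 1) else 0 := by
    funext n; split_ifs with h <;> simp [h]
  rw [this, tsum_ite_eq]

lemma single_digit_sval (s : ℕ) (hs : 2 ≤ s) (k : ℕ) :
    (∑' n : ℕ, (-1 : ℝ) ^ (n + 1) * ((if n = k then 1 else 0 : ℕ) : ℝ) / (s : ℝ) ^ (n + 1))
      = (-1 : ℝ) ^ (k + 1) / (s : ℝ) ^ (k + 1) := by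
  have : (fun n : ℕ => (-1 : ℝ) ^ (n + 1) * ((if n = k then 1 else 0 : ℕ) : ℝ) / (s : ℝ) ^ (n + 1))
      = fun n : ℕ => if n = k then (-1 : ℝ) ^ (k + 1) / (s : ℝ) ^ (k + 1) else 0 := by
    funext n; split_ifs with h <;> simp [h]
  rw [this, tsum_ite_eq]

lemma g_single (s : ℕ) (hs : 2 ≤ s) (g : ℝ → ℝ)
    (hg : ∀ a : ℕ → ℕ, (∀ n, a n ≤ s - 1) → (¬ ∃ N, ∀ n ≥ N, a n = s - 1) →
      g (∑' n : ℕ, (a n : ℝ) / (s : ℝ) ^ (n + 1)) =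
        ∑' n : ℕ, (-1 : ℝ) ^ (n + 1) * (a n : ℝ) / (s : ℝ) ^ (n + 1)) (k : ℕ) :
    g (1 / (s : ℝ) ^ (k + 1)) = (-1 : ℝ) ^ (k + 1) / (s : ℝ) ^ (k + 1) := by
  have hb : ∀ n, (if n = k then 1 else 0 : ℕ) ≤ s - 1 := by
    intro n; split_ifs <;> omega
  have hadm : ¬ ∃ N, ∀ n ≥ N, (if n = k then 1 else 0 : ℕ) = s - 1 := by
    rintro ⟨N, hN⟩
    have := hN (max N (k + 1)) (le_max_left _ _)
    have hk : max N (k + 1) ≠ k := by omega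
    rw [if_neg hk] at this
    omega
  have := hg _ hb hadm
  rwa [single_digit_val s hs k, single_digit_sval s hs k] at this

lemma g_zero (s : ℕ) (hs : 2 ≤ s) (g : ℝ → ℝ)
    (hg : ∀ a : ℕ → ℕ, (∀ n, a n ≤ s - 1) → (¬ ∃ N, ∀ n ≥ N, a n = s - 1) →
      g (∑' n : ℕ, (a n : ℝ) / (s : ℝ) ^ (n + 1)) =
        ∑' n : ℕ, (-1 : ℝ) ^ (n + 1) * (a n : ℝ) / (s : ℝ) ^ (n + 1)) :
    g 0 = 0 := by
  have hb : ∀ n : ℕ, (0 : ℕ) ≤ s - 1 := fun _ => Nat.zero_le _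
  have hadm : ¬ ∃ N : ℕ, ∀ n ≥ N, (0 : ℕ) = s - 1 := by
    rintro ⟨N, hN⟩
    have := hN N le_rfl
    omega
  have := hg (fun _ => 0) hb hadm
  simpa using this

/-- Paper's Lemma 3, second property, for the function `f₊`: `f₊` is neither
nondecreasing nor nonincreasing on `[0,1)`. -/
theorem stmt_4 (s : ℕ) (hs : 2 ≤ s) (g : ℝ → ℝ)
    (hg : ∀ a : ℕ → ℕ, (∀ n, a n ≤ s - 1) → (¬ ∃ N, ∀ n ≥ N, a n = s - 1) →
      g (∑' n : ℕ, (a n : ℝ) / (s : ℝ) ^ (n + 1)) =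
        ∑' n : ℕ, (-1 : ℝ) ^ (n + 1) * (a n : ℝ) / (s : ℝ) ^ (n + 1)) :
    ¬ MonotoneOn g (Set.Ico 0 1) ∧ ¬ AntitoneOn g (Set.Ico 0 1) := by
  have hs' : (2 : ℝ) ≤ (s : ℝ) := by exact_mod_cast hs
  have hspos : (0 : ℝ) < (s : ℝ) := by linarith
  have h0 : g 0 = 0 := g_zero s hs g hg
  have h1 : g (1 / (s : ℝ) ^ 1) = -1 / (s : ℝ) ^ 1 := by
    have := g_single s hs g hg 0
    norm_num at this ⊢
    linarith
  have h2 : g (1 / (s : ℝ) ^ 2) = 1 / (s : ℝ) ^ 2 := by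
    have := g_single s hs g hg 1
    norm_num at this ⊢
    linarith
  have hmem0 : (0 : ℝ) ∈ Set.Ico (0:ℝ) 1 := by constructor <;> norm_num
  have hp1 : (0:ℝ) < 1 / (s : ℝ) ^ 1 := by positivity
  have hp2 : (0:ℝ) < 1 / (s : ℝ) ^ 2 := by positivity
  have hl1 : 1 / (s : ℝ) ^ 1 < 1 := by
    rw [div_lt_one (by positivity)]; nlinarith
  have hl2 : 1 / (s : ℝ) ^ 2 < 1 := by
    rw [div_lt_one (by positivity)]; nlinarith
  have hmem1 : 1 / (s : ℝ) ^ 1 ∈ Set.Ico (0:ℝ) 1 := ⟨le_of_lt hp1, hl1⟩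
  have hmem2 : 1 / (s : ℝ) ^ 2 ∈ Set.Ico (0:ℝ) 1 := ⟨le_of_lt hp2, hl2⟩
  constructor
  · intro hmono
    have hle := hmono hmem0 hmem1 (le_of_lt hp1)
    rw [h0, h1, neg_div] at hle
    linarith
  · intro hanti
    have := hanti hmem0 hmem2 (le_of_lt hp2)
    rw [h0, h2] at this
    linarith
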